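/- arXiv:2509.22553 — 6 statements merged into one kernel-verified Lean document; each statement's English description precedes it below -/
import Mathlib

section
/- Disentanglement correctness (Theorem 5, deterministic core). Let W^{(1)}, …, W^{(K)} ∈ ℝ^{d×d} be weighted adjacency matrices of a common DAG G on [d] for which the identity ordering is topological (W^{(k)}_{a,b} ≠ 0 implies a < b), let Ω^{(k)} be diagonal matrices with positive entries satisfying the node-level non-degeneracy Assumption 2, let B ∈ ℝ^{d×d} be an invertible lower triangular matrix, and set B̂^{(k)} := (Ω^{(k)})^{-1}(I − W^{(k)})^⊤ B^{-1}. For each i ∈ [d] define V_i := span{row i of B̂^{(k)} : k ∈ [K]} ⊆ ℝ^d. Then for every i ∈ [d]: (i) ⋂_{j ∈ c̄h(i)} V_j = span{row l of B^{-1} : l ∈ s̄ur(i)}, and this subspace is nonzero; and (ii) every β in this intersection satisfies (β^⊤B)_l = 0 for all l ∉ s̄ur(i); consequently, if ỹ^{(k)} = B y^{(k)}, then ŷ_i^{(k)} := β^⊤ ỹ^{(k)} is a linear combination of (y_l^{(k)} : l ∈ s̄ur(i)). -/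
open Matrix

lemma dc_vecMul_eq_sum_smul {d : ℕ} (x : Fin d → ℝ) (M : Matrix (Fin d) (Fin d) ℝ) :
    Matrix.vecMul x M = ∑ l, x l • M l := by
  funext j
  simp [Matrix.vecMul, dotProduct, Finset.sum_apply]

lemma dc_row_mul {d : ℕ} (M N : Matrix (Fin d) (Fin d) ℝ) (j : Fin d) :
    (M * N) j = Matrix.vecMul (M j) N := by
  funext l
  simp [Matrix.mul_apply, Matrix.vecMul, dotProduct]

open scoped Classical in
/-- **Theorem 5 (Disentanglement correctness, deterministic core).**
Let `W^{(k)}` be weighted adjacency matrices of a common DAG `G` (edge set `E`) on `[d]`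
for which the identity ordering is topological, let `Ω^{(k)} = diag(ω_k)` have positive
entries and satisfy the node-level non-degeneracy assumption, let `B` be invertible
lower triangular, and set `B̂^{(k)} := (Ω^{(k)})⁻¹ (I − W^{(k)})ᵀ B⁻¹` with
`V_a := span {row a of B̂^{(k)} : k}`.  Then for every node `i`:
(i) `⋂_{j ∈ c̄h(i)} V_j = span {row l of B⁻¹ : l ∈ s̄ur(i)}`, a nonzero subspace; and
(ii) every `β` in this intersection has `(βᵀB)_l = 0` for `l ∉ s̄ur(i)`, so that
`βᵀ(By)` is a linear combination of `(y_l : l ∈ s̄ur(i))`. -/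
theorem disentanglement_correctness
    {d K : ℕ} (E : Fin d → Fin d → Prop)
    (W : Fin K → Matrix (Fin d) (Fin d) ℝ)
    (hsupp : ∀ k a b, W k a b ≠ 0 ↔ E a b)
    (htopo : ∀ a b : Fin d, E a b → a < b)
    (ω : Fin K → Fin d → ℝ) (hω : ∀ k a, 0 < ω k a)
    (hnd : ∀ a : Fin d, Module.finrank ℝ (Submodule.span ℝ (Set.range fun k =>
        (((Matrix.diagonal (ω k))⁻¹ * (1 - W k)ᵀ : Matrix (Fin d) (Fin d) ℝ) a)))
      = ({l | E l a} : Set (Fin d)).ncard + 1)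
    (B : Matrix (Fin d) (Fin d) ℝ) (hB : IsUnit B.det)
    (hBlow : ∀ a b : Fin d, a < b → B a b = 0)
    (i : Fin d) :
    (⨅ j ∈ ({c | E i c} ∪ {i} : Set (Fin d)),
        Submodule.span ℝ (Set.range fun k =>
          (((Matrix.diagonal (ω k))⁻¹ * (1 - W k)ᵀ * B⁻¹ : Matrix (Fin d) (Fin d) ℝ) j)))
      = Submodule.span ℝ ((fun l => (B⁻¹ : Matrix (Fin d) (Fin d) ℝ) l) ''
          ({l | E l i ∧ ∀ c, E i c → E l c} ∪ {i}))
    ∧ Submodule.span ℝ ((fun l => (B⁻¹ : Matrix (Fin d) (Fin d) ℝ) l) ''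
          ({l | E l i ∧ ∀ c, E i c → E l c} ∪ {i})) ≠ ⊥
    ∧ ∀ β : Fin d → ℝ,
        β ∈ (⨅ j ∈ ({c | E i c} ∪ {i} : Set (Fin d)),
          Submodule.span ℝ (Set.range fun k =>
            (((Matrix.diagonal (ω k))⁻¹ * (1 - W k)ᵀ * B⁻¹ : Matrix (Fin d) (Fin d) ℝ) j))) →
        (∀ l : Fin d,
            l ∉ ({l | E l i ∧ ∀ c, E i c → E l c} ∪ {i} : Set (Fin d)) →
            Matrix.vecMul β B l = 0)
        ∧ ∀ y : Fin d → ℝ,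
            β ⬝ᵥ B.mulVec y =
              ∑ l : Fin d,
                if l ∈ ({l | E l i ∧ ∀ c, E i c → E l c} ∪ {i} : Set (Fin d))
                then Matrix.vecMul β B l * y l else 0 := by
  classical
  have hBBinv : B * B⁻¹ = 1 := Matrix.mul_nonsing_inv B hB
  have hBinvB : B⁻¹ * B = 1 := Matrix.nonsing_inv_mul B hB
  have hBinvU : IsUnit (B⁻¹ : Matrix (Fin d) (Fin d) ℝ) := by
    rw [Matrix.isUnit_iff_isUnit_det, Matrix.det_nonsing_inv]
    exact isUnit_ringInverse.2 hB
  have hb : LinearIndependent ℝ (fun l => (B⁻¹ : Matrix (Fin d) (Fin d) ℝ) l) :=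
    Matrix.linearIndependent_rows_iff_isUnit.2 hBinvU
  haveI : Nonempty (Fin d) := ⟨i⟩
  let b : Module.Basis (Fin d) ℝ (Fin d → ℝ) :=
    basisOfLinearIndependentOfCardEqFinrank hb (by simp)
  have hbcoe : ⇑b = fun l => (B⁻¹ : Matrix (Fin d) (Fin d) ℝ) l :=
    coe_basisOfLinearIndependentOfCardEqFinrank _ _
  set S : Set (Fin d) := {l | E l i ∧ ∀ c, E i c → E l c} ∪ {i} with hS
  set Ch : Set (Fin d) := {c | E i c} ∪ {i} with hCh
  set Pa : Fin d → Set (Fin d) := fun j => {l | E l j} ∪ {j} with hPa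
  -- combinatorial core
  have hPaS : ∀ l : Fin d, (∀ j ∈ Ch, l ∈ Pa j) ↔ l ∈ S := by
    intro l
    simp only [hPa, hCh, hS, Set.mem_union, Set.mem_setOf_eq, Set.mem_singleton_iff]
    constructor
    · intro h
      rcases h i (Or.inr rfl) with hli | hli
      · left
        refine ⟨hli, fun c hc => ?_⟩
        rcases h c (Or.inl hc) with h' | h'
        · exact h'
        · exact absurd ((htopo l i hli).trans (htopo i c hc))
            (by rw [h']; exact lt_irrefl c)
      · exact Or.inr hli
    · rintro (⟨hli, hall⟩ | rfl) j (hj | rfl)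
      · exact Or.inl (hall j hj)
      · exact Or.inl hli
      · exact Or.inl hj
      · exact Or.inr rfl
  -- vanishing entries of U
  have hU : ∀ (k : Fin K) (j l : Fin d), l ∉ Pa j →
      (((Matrix.diagonal (ω k))⁻¹ * (1 - W k)ᵀ : Matrix (Fin d) (Fin d) ℝ)) j l = 0 := by
    intro k j l hl
    simp only [hPa, Set.mem_union, Set.mem_setOf_eq, Set.mem_singleton_iff, not_or] at hl
    have hW : W k l j = 0 := by
      by_contra h; exact hl.1 ((hsupp k l j).1 h)
    rw [Matrix.inv_diagonal, Matrix.diagonal_mul]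
    simp [Matrix.one_apply, hl.2, hW]
  -- inclusion of row spaces
  have hVle : ∀ j : Fin d, Submodule.span ℝ (Set.range fun k =>
      (((Matrix.diagonal (ω k))⁻¹ * (1 - W k)ᵀ * B⁻¹ : Matrix (Fin d) (Fin d) ℝ)) j) ≤
      Submodule.span ℝ ((fun l => (B⁻¹ : Matrix (Fin d) (Fin d) ℝ) l) '' Pa j) := by
    intro j
    rw [Submodule.span_le]
    rintro _ ⟨k, rfl⟩
    show (((Matrix.diagonal (ω k))⁻¹ * (1 - W k)ᵀ * B⁻¹ : Matrix (Fin d) (Fin d) ℝ)) j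
      ∈ Submodule.span ℝ ((fun l => (B⁻¹ : Matrix (Fin d) (Fin d) ℝ) l) '' Pa j)
    rw [dc_row_mul, dc_vecMul_eq_sum_smul]
    refine Submodule.sum_mem _ fun l _ => ?_
    by_cases hl : l ∈ Pa j
    · exact Submodule.smul_mem _ _ (Submodule.subset_span ⟨l, hl, rfl⟩)
    · rw [hU k j l hl, zero_smul]; exact Submodule.zero_mem _
  -- equality of row spaces
  have hV : ∀ j : Fin d, Submodule.span ℝ (Set.range fun k =>
      (((Matrix.diagonal (ω k))⁻¹ * (1 - W k)ᵀ * B⁻¹ : Matrix (Fin d) (Fin d) ℝ)) j) =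
      Submodule.span ℝ ((fun l => (B⁻¹ : Matrix (Fin d) (Fin d) ℝ) l) '' Pa j) := by
    intro j
    refine Submodule.eq_of_le_of_finrank_le (hVle j) ?_
    have hjmem : j ∉ {l | E l j} := fun h => lt_irrefl j (htopo j j h)
    have hcard : (Pa j).ncard = ({l | E l j} : Set (Fin d)).ncard + 1 := by
      have h1 : Pa j = insert j {l | E l j} := by
        simp [hPa, Set.union_singleton]
      rw [h1, Set.ncard_insert_of_notMem hjmem (Set.toFinite _)]
    have h1 : Module.finrank ℝ
        (Submodule.span ℝ ((fun l => (B⁻¹ : Matrix (Fin d) (Fin d) ℝ) l) '' Pa j))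
        = (Pa j).ncard := by
      have hli : LinearIndependent ℝ
          (fun x : Pa j => (B⁻¹ : Matrix (Fin d) (Fin d) ℝ) (x : Fin d)) :=
        hb.comp _ Subtype.val_injective
      rw [Set.image_eq_range, finrank_span_eq_card hli,
        Set.ncard_eq_toFinset_card', Set.toFinset_card]
    let e : (Fin d → ℝ) ≃ₗ[ℝ] (Fin d → ℝ) :=
      LinearEquiv.ofLinear (Matrix.vecMulLinear B⁻¹) (Matrix.vecMulLinear B)
        (LinearMap.ext fun x => by
          simp only [LinearMap.comp_apply, Matrix.vecMulLinear_apply, LinearMap.id_apply]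
          rw [Matrix.vecMul_vecMul, hBBinv, Matrix.vecMul_one])
        (LinearMap.ext fun x => by
          simp only [LinearMap.comp_apply, Matrix.vecMulLinear_apply, LinearMap.id_apply]
          rw [Matrix.vecMul_vecMul, hBinvB, Matrix.vecMul_one])
    have h2 : Submodule.span ℝ (Set.range fun k =>
        (((Matrix.diagonal (ω k))⁻¹ * (1 - W k)ᵀ * B⁻¹ : Matrix (Fin d) (Fin d) ℝ)) j)
        = Submodule.map (e : (Fin d → ℝ) →ₗ[ℝ] (Fin d → ℝ))
            (Submodule.span ℝ (Set.range fun k =>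
              (((Matrix.diagonal (ω k))⁻¹ * (1 - W k)ᵀ : Matrix (Fin d) (Fin d) ℝ)) j)) := by
      rw [Submodule.map_span, ← Set.range_comp]
      congr 1
    have h3 : Module.finrank ℝ (Submodule.span ℝ (Set.range fun k =>
        (((Matrix.diagonal (ω k))⁻¹ * (1 - W k)ᵀ * B⁻¹ : Matrix (Fin d) (Fin d) ℝ)) j))
        = ({l | E l j} : Set (Fin d)).ncard + 1 := by
      rw [h2, LinearEquiv.finrank_map_eq, hnd j]
    rw [h1, hcard, h3]
  -- part (i)
  have hmain : (⨅ j ∈ Ch, Submodule.span ℝ (Set.range fun k =>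
      (((Matrix.diagonal (ω k))⁻¹ * (1 - W k)ᵀ * B⁻¹ : Matrix (Fin d) (Fin d) ℝ)) j))
      = Submodule.span ℝ ((fun l => (B⁻¹ : Matrix (Fin d) (Fin d) ℝ) l) '' S) := by
    ext x
    simp only [Submodule.mem_iInf]
    rw [show ((fun l => (B⁻¹ : Matrix (Fin d) (Fin d) ℝ) l) '' S) = ⇑b '' S by rw [hbcoe]]
    rw [Module.Basis.mem_span_image]
    constructor
    · intro h l hl
      rw [← hPaS l]
      intro j hj
      have hx : x ∈ Submodule.span ℝ (⇑b '' Pa j) := by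
        rw [hbcoe, ← hV j]; exact h j hj
      exact (b.mem_span_image).1 hx hl
    · intro h j hj
      rw [hV j, show ((fun l => (B⁻¹ : Matrix (Fin d) (Fin d) ℝ) l) '' Pa j) = ⇑b '' Pa j
        by rw [hbcoe]]
      exact (b.mem_span_image).2 fun l hl => (hPaS l).2 (h hl) j hj
  refine ⟨hmain, ?_, ?_⟩
  · intro hbot
    have hmem : (B⁻¹ : Matrix (Fin d) (Fin d) ℝ) i
        ∈ Submodule.span ℝ ((fun l => (B⁻¹ : Matrix (Fin d) (Fin d) ℝ) l) '' S) :=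
      Submodule.subset_span ⟨i, Or.inr rfl, rfl⟩
    rw [hbot, Submodule.mem_bot] at hmem
    exact hb.ne_zero i hmem
  · intro β hβ
    rw [hmain] at hβ
    have hzero : ∀ l, l ∉ S → Matrix.vecMul β B l = 0 := by
      have key : ∀ x ∈ Submodule.span ℝ
          ((fun l => (B⁻¹ : Matrix (Fin d) (Fin d) ℝ) l) '' S),
          ∀ l, l ∉ S → Matrix.vecMul x B l = 0 := by
        intro x hx
        induction hx using Submodule.span_induction with
        | mem x hx =>
          intro l hl
          obtain ⟨r, hr, rfl⟩ := hx
          have h1 : Matrix.vecMul ((B⁻¹ : Matrix (Fin d) (Fin d) ℝ) r) B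
              = (1 : Matrix (Fin d) (Fin d) ℝ) r := by
            rw [← dc_row_mul, hBinvB]
          rw [h1, Matrix.one_apply_ne]
          exact fun h => hl (h ▸ hr)
        | zero => intro l hl; simp
        | add x y _ _ hx hy =>
          intro l hl
          rw [Matrix.add_vecMul]
          simp [hx l hl, hy l hl]
        | smul c x _ hx =>
          intro l hl
          rw [Matrix.smul_vecMul]
          simp [hx l hl]
      exact key β hβ
    refine ⟨hzero, fun y => ?_⟩
    rw [Matrix.dotProduct_mulVec]
    simp only [dotProduct]
    refine Finset.sum_congr rfl fun l _ => ?_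
    by_cases hl : l ∈ S
    · rw [if_pos hl]
    · rw [if_neg hl, hzero l hl, zero_mul]
end

section
/- No cross-environment proportional columns (Lemma 1). Let W_1, W_2 ∈ ℝ^{d×d} have zero diagonal, identical supports ((W_1)_{a,b} ≠ 0 ⟺ (W_2)_{a,b} ≠ 0 for all a, b), and no 2-cycles in the support (there are no a ≠ b with (W_1)_{a,b} ≠ 0 and (W_1)_{b,a} ≠ 0). Then for any i ≠ j in [d] there exists no θ ∈ ℝ such that the i-th column of I − W_1 equals θ times the j-th column of I − W_2. -/
/-- **Lemma 1 (No cross-environment proportional columns).**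
Let `W₁ W₂ : ℝ^{d×d}` have zero diagonal, identical supports, and no 2-cycles in the
support.  Then for any `i ≠ j` there is no `θ : ℝ` with
`(I - W₁)_{·,i} = θ · (I - W₂)_{·,j}`. -/
theorem no_cross_environment_proportional_columns
    {d : ℕ} (W₁ W₂ : Matrix (Fin d) (Fin d) ℝ)
    (hdiag₁ : ∀ a, W₁ a a = 0) (hdiag₂ : ∀ a, W₂ a a = 0)
    (hsupp : ∀ a b, W₁ a b ≠ 0 ↔ W₂ a b ≠ 0)
    (hno2 : ∀ a b : Fin d, a ≠ b → ¬ (W₁ a b ≠ 0 ∧ W₁ b a ≠ 0))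
    (i j : Fin d) (hij : i ≠ j) :
    ¬ ∃ θ : ℝ, (fun a => (1 - W₁) a i) = (fun a => θ * (1 - W₂) a j) := by
  rintro ⟨θ, h⟩
  have hi := congrFun h i
  have hj := congrFun h j
  simp [Matrix.sub_apply, Matrix.one_apply, hij, hij.symm, hdiag₁, hdiag₂] at hi hj
  -- hi : 1 = θ * -(W₂ i j), hj : -(W₁ j i) = θ
  have h1 : W₁ j i * W₂ i j = 1 := by
    rw [← hj] at hi; nlinarith [hi]
  have hW₁ji : W₁ j i ≠ 0 := by
    intro h0; rw [h0] at h1; simp at h1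
  have hW₂ij : W₂ i j ≠ 0 := by
    intro h0; rw [h0] at h1; simp at h1
  exact hno2 j i hij.symm ⟨hW₁ji, (hsupp i j).mpr hW₂ij⟩
end

section
/- Cross-environment alignment of recovered noise rows (step in the proof of Theorem 2). Let W_1, W_2 ∈ ℝ^{d×d} be weighted adjacency matrices of a common DAG on [d] (zero diagonal, identical supports, and no 2-cycles in the support), let Ω_1, Ω_2 be diagonal matrices with positive entries, and set U_m := Ω_m^{-1}(I − W_m)^⊤ for m = 1, 2. If there exist a vector β ∈ ℝ^d, indices i, j ∈ [d], and nonzero constants c_1, c_2 such that β^⊤ = c_1 · (row i of U_1) = c_2 · (row j of U_2), then i = j. -/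
open Matrix

/-- **Step in the proof of Theorem 2 (cross-environment alignment of recovered noise rows).**
Let `W₁, W₂` be weighted adjacency matrices of a common DAG (zero diagonal, identical
supports, no 2-cycles in the support), let `Ω₁, Ω₂` be diagonal with positive entries,
and set `Uₘ := Ωₘ⁻¹ (I − Wₘ)ᵀ`.  If `βᵀ = c₁ · (row i of U₁) = c₂ · (row j of U₂)` with
`c₁, c₂ ≠ 0`, then `i = j`. -/
theorem cross_environment_alignment_of_noise_rows
    {d : ℕ} (W₁ W₂ : Matrix (Fin d) (Fin d) ℝ) (ω₁ ω₂ : Fin d → ℝ)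
    (hω₁ : ∀ a, 0 < ω₁ a) (hω₂ : ∀ a, 0 < ω₂ a)
    (hdiag₁ : ∀ a, W₁ a a = 0) (hdiag₂ : ∀ a, W₂ a a = 0)
    (hsupp : ∀ a b, W₁ a b ≠ 0 ↔ W₂ a b ≠ 0)
    (hno2 : ∀ a b : Fin d, a ≠ b → ¬ (W₁ a b ≠ 0 ∧ W₁ b a ≠ 0))
    (β : Fin d → ℝ) (i j : Fin d) (c₁ c₂ : ℝ) (hc₁ : c₁ ≠ 0) (hc₂ : c₂ ≠ 0)
    (h₁ : β = c₁ • (((Matrix.diagonal ω₁)⁻¹ * (1 - W₁)ᵀ : Matrix (Fin d) (Fin d) ℝ) i))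
    (h₂ : β = c₂ • (((Matrix.diagonal ω₂)⁻¹ * (1 - W₂)ᵀ : Matrix (Fin d) (Fin d) ℝ) j)) :
    i = j := by
  by_contra hij
  have key : ∀ (ω : Fin d → ℝ), (∀ a, 0 < ω a) →
      ∀ (W : Matrix (Fin d) (Fin d) ℝ) (a b : Fin d),
      (((Matrix.diagonal ω)⁻¹ * (1 - W)ᵀ : Matrix (Fin d) (Fin d) ℝ)) a b
        = (ω a)⁻¹ * ((if a = b then 1 else 0) - W b a) := by
    intro ω hω W a b
    have hinv : (Matrix.diagonal ω)⁻¹ = Matrix.diagonal (fun a => (ω a)⁻¹) := by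
      apply Matrix.inv_eq_right_inv
      rw [Matrix.diagonal_mul_diagonal]
      convert Matrix.diagonal_one with a
      exact mul_inv_cancel₀ (hω a).ne'
    rw [hinv]
    simp [Matrix.diagonal_mul, Matrix.one_apply]
  have e1 := congrFun h₁
  have e2 := congrFun h₂
  have bi1 : β i = c₁ * ((ω₁ i)⁻¹ * (1 - W₁ i i)) := by
    have := e1 i; rw [Pi.smul_apply, key ω₁ hω₁] at this; simpa using this
  have bi2 : β i = c₂ * ((ω₂ j)⁻¹ * (0 - W₂ i j)) := by
    have := e2 i; rw [Pi.smul_apply, key ω₂ hω₂] at this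
    simpa [Ne.symm hij] using this
  have bj1 : β j = c₁ * ((ω₁ i)⁻¹ * (0 - W₁ j i)) := by
    have := e1 j; rw [Pi.smul_apply, key ω₁ hω₁] at this; simpa [hij] using this
  have bj2 : β j = c₂ * ((ω₂ j)⁻¹ * (1 - W₂ j j)) := by
    have := e2 j; rw [Pi.smul_apply, key ω₂ hω₂] at this; simpa using this
  have hβi : β i ≠ 0 := by
    rw [bi1, hdiag₁ i]; simp [hc₁, (hω₁ i).ne']
  have hβj : β j ≠ 0 := by
    rw [bj2, hdiag₂ j]; simp [hc₂, (hω₂ j).ne']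
  have hW2ij : W₂ i j ≠ 0 := by
    intro h; rw [bi2, h] at hβi; simp at hβi
  have hW1ji : W₁ j i ≠ 0 := by
    intro h; rw [bj1, h] at hβj; simp at hβj
  exact hno2 i j hij ⟨(hsupp i j).mpr hW2ij, hW1ji⟩
end

section
/- Uniqueness of matched columns across environments (step in the proof of Theorem 1). Let Ŵ_1, …, Ŵ_K ∈ ℝ^{d×d} be weighted adjacency matrices of a common DAG on [d] (zero diagonal, identical supports, and no 2-cycles in the support). If a vector v ∈ ℝ^d, indices j_1, …, j_K ∈ [d], and nonzero constants c_1, …, c_K satisfy v = c_k · ((I − Ŵ_k) column j_k) for every k ∈ [K], then j_1 = ⋯ = j_K and c_1 = ⋯ = c_K. -/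
open Matrix

/-- **Step in the proof of Theorem 1 (uniqueness of matched columns across environments).**
Let `Ŵ₁, …, Ŵ_K` be weighted adjacency matrices of a common DAG on `[d]` (zero diagonal,
identical supports, no 2-cycles in the support).  If `v = c_k · ((I − Ŵ_k) column j_k)`
with `c_k ≠ 0` for every `k`, then all the `j_k` coincide and all the `c_k` coincide. -/
theorem uniqueness_of_matched_columns
    {d K : ℕ} (What : Fin K → Matrix (Fin d) (Fin d) ℝ)
    (hdiag : ∀ k a, What k a a = 0)
    (hsupp : ∀ k k' a b, What k a b ≠ 0 ↔ What k' a b ≠ 0)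
    (hno2 : ∀ k (a b : Fin d), a ≠ b → ¬ (What k a b ≠ 0 ∧ What k b a ≠ 0))
    (v : Fin d → ℝ) (j : Fin K → Fin d) (c : Fin K → ℝ) (hc : ∀ k, c k ≠ 0)
    (h : ∀ k, v = fun a => c k * (1 - What k) a (j k)) :
    ∀ k k' : Fin K, j k = j k' ∧ c k = c k' := by
  have hva : ∀ k a, v a = c k * ((if a = j k then (1:ℝ) else 0) - What k a (j k)) := by
    intro k a
    have := congrFun (h k) a
    simpa [Matrix.sub_apply, Matrix.one_apply] using this
  have hvj : ∀ k, v (j k) = c k := by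
    intro k
    simpa [hdiag k (j k)] using hva k (j k)
  intro k k'
  have hjj : j k = j k' := by
    by_contra hne
    have h1 : v (j k) ≠ 0 := by rw [hvj k]; exact hc k
    have h2 : v (j k') ≠ 0 := by rw [hvj k']; exact hc k'
    -- v (j k) via k': shows What k' (j k) (j k') ≠ 0
    have e1 := hva k' (j k)
    rw [if_neg hne] at e1
    have hW1 : What k' (j k) (j k') ≠ 0 := by
      intro h0; rw [h0] at e1; simp at e1; exact h1 e1
    have e2 := hva k (j k')
    rw [if_neg (Ne.symm hne)] at e2
    have hW2 : What k (j k') (j k) ≠ 0 := by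
      intro h0; rw [h0] at e2; simp at e2; exact h2 e2
    have hW2' : What k' (j k') (j k) ≠ 0 := (hsupp k k' (j k') (j k)).mp hW2
    exact hno2 k' (j k) (j k') hne ⟨hW1, hW2'⟩
  refine ⟨hjj, ?_⟩
  rw [← hvj k, ← hvj k', hjj]
end

section
/- Surrounded-node support of the mixing ambiguity (step in the proof of Theorem 1). Let W_1, …, W_K and Ŵ_1, …, Ŵ_K all be weighted adjacency matrices of the same DAG G on [d] (zero diagonal, supports equal to the edge set of G, no 2-cycles in the support). Assume the non-degeneracy condition: for every node j, the vectors ((I − Ŵ_k)_{l,j})_{l ∈ p̄a(j)} ∈ ℝ^{p̄a(j)}, k ∈ [K], span all of ℝ^{p̄a(j)}. If S ∈ ℝ^{d×d} satisfies I − W_k^⊤ = (I − Ŵ_k^⊤) S for every k ∈ [K], then for all l ≠ i with S_{l,i} ≠ 0 one has i ∈ pa_G(l) and ch_G(l) ⊆ ch_G(i), i.e., i ∈ sur_G(l); equivalently, S_{l,i} ≠ 0 implies i ∈ s̄ur_G(l). -/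
open Matrix

/-- **Step in the proof of Theorem 1 (surrounded-node support of the mixing ambiguity).**
Let `W_k` and `Ŵ_k` all be weighted adjacency matrices of the same DAG `G` (edge set
`E`) on `[d]` (zero diagonal, supports equal to the edge set, no 2-cycles).  Assume the
non-degeneracy condition: for every node `j`, the vectors
`((I − Ŵ_k)_{l,j})_{l ∈ p̄a(j)}`, `k ∈ [K]`, span all of `ℝ^{p̄a(j)}`.
If `S` satisfies `I − W_kᵀ = (I − Ŵ_kᵀ) S` for every `k`, then `S_{l,i} ≠ 0` with
`l ≠ i` forces `i ∈ pa(l)` and `ch(l) ⊆ ch(i)`, i.e. `i ∈ sur(l)`. -/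
theorem surrounded_node_support_of_mixing_ambiguity
    {d K : ℕ} (E : Fin d → Fin d → Prop)
    (W What : Fin K → Matrix (Fin d) (Fin d) ℝ)
    (hdiagW : ∀ k a, W k a a = 0)
    (hdiagWhat : ∀ k a, What k a a = 0)
    (hsuppW : ∀ k a b, W k a b ≠ 0 ↔ E a b)
    (hsuppWhat : ∀ k a b, What k a b ≠ 0 ↔ E a b)
    (hno2 : ∀ a b : Fin d, a ≠ b → ¬ (E a b ∧ E b a))
    (hnd : ∀ j : Fin d,
      Submodule.span ℝ (Set.range fun k =>
        (fun l : ({l | E l j} ∪ {j} : Set (Fin d)) => (1 - What k) l.1 j)) = ⊤)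
    (S : Matrix (Fin d) (Fin d) ℝ)
    (hS : ∀ k, 1 - (W k)ᵀ = (1 - (What k)ᵀ) * S) :
    ∀ l i : Fin d, l ≠ i → S l i ≠ 0 → E i l ∧ ∀ c, E l c → E i c := by
  classical
  have key : ∀ l i : Fin d, S l i ≠ 0 → ∀ j : Fin d, i ≠ j → (E l j ∨ l = j) → E i j := by
    intro l i hSli j hij hlj
    by_contra hEij
    set T : Set (Fin d) := {l | E l j} ∪ {j} with hTdef
    haveI : Fintype ↥T := (Set.toFinite T).fintype
    let f : (↥T → ℝ) →ₗ[ℝ] ℝ :=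
      { toFun := fun v => ∑ x : ↥T, v x * S x.1 i
        map_add' := fun u v => by simp [add_mul, Finset.sum_add_distrib]
        map_smul' := fun c v => by simp [Finset.mul_sum, mul_assoc] }
    have hker : ∀ k, f (fun x : ↥T => (1 - What k) x.1 j) = 0 := by
      intro k
      show (∑ x : ↥T, (1 - What k) x.1 j * S x.1 i) = 0
      have h1 : (∑ x : ↥T, (1 - What k) x.1 j * S x.1 i)
          = ∑ m ∈ Finset.univ.filter (· ∈ T), (1 - What k) m j * S m i := by
        exact (Finset.sum_subtype (Finset.univ.filter (· ∈ T))
          (fun x => by simp) (fun m => (1 - What k) m j * S m i)).symm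
      have h2 : ∑ m ∈ Finset.univ.filter (· ∈ T), (1 - What k) m j * S m i
          = ∑ m : Fin d, (1 - What k) m j * S m i := by
        apply Finset.sum_subset (Finset.filter_subset _ _)
        intro m _ hm
        simp only [Finset.mem_filter, Finset.mem_univ, true_and] at hm
        have hmemE : ¬ E m j := fun h => hm (Or.inl h)
        have hmj : m ≠ j := fun h => hm (Or.inr h)
        have : (1 - What k) m j = 0 := by
          have hW : What k m j = 0 := by
            by_contra h'; exact hmemE ((hsuppWhat k m j).mp h')
          simp [Matrix.sub_apply, Matrix.one_apply, hmj, hW]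
        simp [this]
      have h3 : ∑ m : Fin d, (1 - What k) m j * S m i
          = ((1 - (What k)ᵀ) * S) j i := by
        rw [Matrix.mul_apply]
        apply Finset.sum_congr rfl
        intro m _
        congr 1
        simp [Matrix.sub_apply, Matrix.one_apply, Matrix.transpose_apply, eq_comm]
      have h4 : ((1 - (What k)ᵀ) * S) j i = 0 := by
        rw [← hS k]
        have hW : W k i j = 0 := by
          by_contra h'; exact hEij ((hsuppW k i j).mp h')
        simp [Matrix.sub_apply, Matrix.one_apply, Matrix.transpose_apply, hij.symm, hW]
      rw [h1, h2, h3, h4]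
    have hfzero : f = 0 := by
      apply LinearMap.ker_eq_top.mp
      rw [eq_top_iff, ← hnd j]
      apply Submodule.span_le.mpr
      rintro _ ⟨k, rfl⟩
      exact hker k
    have hlT : l ∈ T := by
      rcases hlj with h | h
      · exact Or.inl h
      · exact Or.inr h
    have hv := LinearMap.congr_fun hfzero
      ((Pi.single (⟨l, hlT⟩ : ↥T) (1:ℝ) : ↥T → ℝ))
    simp only [LinearMap.zero_apply] at hv
    have hfeq : f ((Pi.single (⟨l, hlT⟩ : ↥T) (1:ℝ) : ↥T → ℝ))
        = ∑ x : ↥T, (Pi.single (⟨l, hlT⟩ : ↥T) (1:ℝ) : ↥T → ℝ) x * S x.1 i := by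
      rfl
    rw [hfeq] at hv
    rw [Finset.sum_eq_single (⟨l, hlT⟩ : ↥T)] at hv
    · simp at hv; exact hSli hv
    · intro b _ hb; simp [Pi.single_apply, hb]
    · simp
  intro l i hli hSli
  have hEil : E i l := key l i hSli l (fun h => hli h.symm) (Or.inr rfl)
  refine ⟨hEil, fun c hlc => ?_⟩
  by_cases hic : i = c
  · subst hic
    exact absurd ⟨hlc, hEil⟩ (hno2 l i hli)
  · exact key l i hSli c hic (Or.inl hlc)
end

section
/- Span of recovered regression rows equals the parent-row span (step in the proof of Theorem 5). Let W_1, …, W_K ∈ ℝ^{d×d} be weighted adjacency matrices of a common DAG G on [d] (zero diagonal, supports equal to the edge set of G), let Ω_1, …, Ω_K be invertible diagonal matrices, and let B ∈ ℝ^{d×d} be invertible. Fix a node i ∈ [d] and assume dim span{row i of Ω_k^{-1}(I − W_k)^⊤ : k ∈ [K]} = |pa(i)| + 1. Then span{row i of Ω_k^{-1}(I − W_k)^⊤ B^{-1} : k ∈ [K]} = span{row l of B^{-1} : l ∈ p̄a(i)}. -/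
open Matrix

/-- **Step in the proof of Theorem 5 (span of recovered regression rows equals the
parent-row span).**  Let `W_1, …, W_K` be weighted adjacency matrices of a common DAG
`G` on `[d]` (zero diagonal, supports equal to the edge set `E` of `G`, `G` acyclic),
let `Ω_k = diag(ω_k)` be invertible diagonal matrices, and let `B` be invertible.
Fix a node `i` and assume `dim span {row i of Ω_k⁻¹ (I − W_k)ᵀ : k} = |pa(i)| + 1`.
Then `span {row i of Ω_k⁻¹ (I − W_k)ᵀ B⁻¹ : k} = span {row l of B⁻¹ : l ∈ p̄a(i)}`. -/
theorem span_recovered_rows_eq_parent_row_span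
    {d K : ℕ} (E : Fin d → Fin d → Prop)
    (W : Fin K → Matrix (Fin d) (Fin d) ℝ)
    (hdiag : ∀ k a, W k a a = 0)
    (hsupp : ∀ k a b, W k a b ≠ 0 ↔ E a b)
    (hacyc : ∀ a, ¬ Relation.TransGen E a a)
    (ω : Fin K → Fin d → ℝ) (hω : ∀ k a, ω k a ≠ 0)
    (B : Matrix (Fin d) (Fin d) ℝ) (hB : IsUnit B.det)
    (i : Fin d)
    (hnd : Module.finrank ℝ (Submodule.span ℝ (Set.range fun k =>
        (((Matrix.diagonal (ω k))⁻¹ * (1 - W k)ᵀ : Matrix (Fin d) (Fin d) ℝ) i)))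
      = ({l | E l i} : Set (Fin d)).ncard + 1) :
    Submodule.span ℝ (Set.range fun k =>
        (((Matrix.diagonal (ω k))⁻¹ * (1 - W k)ᵀ * B⁻¹ : Matrix (Fin d) (Fin d) ℝ) i))
      = Submodule.span ℝ ((fun l => (B⁻¹ : Matrix (Fin d) (Fin d) ℝ) l) ''
          ({l | E l i} ∪ {i})) := by
  classical
  set e : Fin d → (Fin d → ℝ) := fun l => Pi.single l 1 with he
  set S : Set (Fin d) := {l | E l i} ∪ {i} with hS
  set v : Fin K → (Fin d → ℝ) :=
    fun k => (((Matrix.diagonal (ω k))⁻¹ * (1 - W k)ᵀ : Matrix (Fin d) (Fin d) ℝ) i) with hv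
  have hiE : ¬ E i i := fun h => hacyc i (Relation.TransGen.single h)
  have hSins : S = insert i {l | E l i} := by
    rw [hS, Set.insert_eq, Set.union_comm]
  have hScard : S.ncard = ({l | E l i} : Set (Fin d)).ncard + 1 := by
    rw [hSins]; exact Set.ncard_insert_of_notMem hiE (Set.toFinite _)
  -- support of v k is contained in S
  have hvsupp : ∀ k l, l ∉ S → v k l = 0 := by
    intro k l hl
    have hli : l ≠ i := fun h => hl (Or.inr (by simp [h]))
    have hE : ¬ E l i := fun h => hl (Or.inl h)
    have hW : W k l i = 0 := by
      by_contra h; exact hE ((hsupp k l i).1 h)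
    have hdi : (Matrix.diagonal (ω k))⁻¹ = Matrix.diagonal (Ring.inverse (ω k)) :=
      Matrix.inv_diagonal _
    simp [hv, hdi, Matrix.diagonal_mul, Matrix.transpose_apply, Matrix.sub_apply,
      Matrix.one_apply, hli.symm, hW]
  -- every vector supported in S lies in the span of the singles over S
  have hmem : ∀ x : Fin d → ℝ, (∀ l ∉ S, x l = 0) →
      x ∈ Submodule.span ℝ (e '' S) := by
    intro x hx
    have hxsum : x = ∑ l ∈ Finset.univ.filter (· ∈ S), x l • e l := by
      funext j
      rw [Finset.sum_apply]
      simp only [he, Pi.smul_apply, Pi.single_apply, smul_eq_mul, mul_ite, mul_one, mul_zero]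
      rw [Finset.sum_ite_eq (Finset.univ.filter (· ∈ S)) j x]
      by_cases hj : j ∈ S
      · simp [hj]
      · simp [hj, hx j hj]
    rw [hxsum]
    refine Submodule.sum_mem _ ?_
    intro l hl
    exact Submodule.smul_mem _ _ (Submodule.subset_span
      ⟨l, (Finset.mem_filter.mp hl).2, rfl⟩)
  have hle : Submodule.span ℝ (Set.range v) ≤ Submodule.span ℝ (e '' S) := by
    rw [Submodule.span_le]
    rintro _ ⟨k, rfl⟩
    exact hmem _ (hvsupp k)
  -- the singles over S are linearly independent
  have hinj : Function.Injective e := by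
    intro a b h
    by_contra hab
    have := congrFun h a
    simp [he, Pi.single_apply, hab] at this
  have hindAll : LinearIndependent ℝ e := by
    have hb := (Pi.basisFun ℝ (Fin d)).linearIndependent
    have hbe : ⇑(Pi.basisFun ℝ (Fin d)) = e := funext fun l => by
      rw [Pi.basisFun_apply]
    rwa [hbe] at hb
  have hindS : LinearIndependent ℝ ((↑) : (e '' S) → (Fin d → ℝ)) :=
    LinearIndepOn.image_of_comp (s := S) e id (hindAll.comp ((↑) : S → Fin d) Subtype.val_injective)
  have hfr : Module.finrank ℝ (Submodule.span ℝ (e '' S)) = S.ncard := by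
    rw [finrank_span_set_eq_card hindS, Set.toFinset_image,
      Finset.card_image_of_injective _ hinj]
    rw [Set.ncard_eq_toFinset_card']
  have heq : Submodule.span ℝ (Set.range v) = Submodule.span ℝ (e '' S) :=
    Submodule.eq_of_le_of_finrank_le hle (by rw [hfr, hScard, hnd])
  -- push the equality through multiplication by B⁻¹
  have hmap := congrArg
    (Submodule.map (Matrix.vecMulLinear (B⁻¹ : Matrix (Fin d) (Fin d) ℝ))) heq
  rw [Submodule.map_span, Submodule.map_span, ← Set.range_comp,
    Set.image_image] at hmap
  have h1 : ((Matrix.vecMulLinear (B⁻¹ : Matrix (Fin d) (Fin d) ℝ)) ∘ v) =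
      fun k => (((Matrix.diagonal (ω k))⁻¹ * (1 - W k)ᵀ * B⁻¹ :
        Matrix (Fin d) (Fin d) ℝ) i) := by
    funext k
    simp only [Function.comp_apply, Matrix.vecMulLinear_apply, hv]
    funext j
    simp [Matrix.mul_apply, Matrix.vecMul, dotProduct]
  have h2 : (fun l => (Matrix.vecMulLinear (B⁻¹ : Matrix (Fin d) (Fin d) ℝ)) (e l)) =
      fun l => (B⁻¹ : Matrix (Fin d) (Fin d) ℝ) l := by
    funext l
    simp [he, Matrix.vecMulLinear_apply, Matrix.single_one_vecMul, Matrix.row_apply']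
  rw [h1, h2] at hmap
  exact hmap
end
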